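/- Let V be a finite type, let E be a finite set of ordered pairs (j,k) of distinct elements of V (the edges of a graph, each listed once), and let Φ : V → ℝ. Define g₂ : ℝ → ℝ by g₂(x) = ∫ t in 0..x, (2·Real.arctan (Real.exp t) − π/2) and the circle-pattern functional S : (V → ℝ) → ℝ by S(ρ) = ∑_{(j,k) ∈ E} (g₂(ρ j − ρ k) − (π/2)·(ρ j + ρ k)) + ∑_{j ∈ V} Φ j · ρ j. Then S is convex on all of ℝ^V: ConvexOn ℝ Set.univ S. -/
import Mathlib


open Real

/-- `g₂ x = ∫ t in 0..x, (2 arctan (exp t) − π/2)`; up to an additive constant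
this is `Im Li₂(i eˣ) + Im Li₂(i e⁻ˣ) − (π/2) x` reparametrized. -/
noncomputable def circlePatternG₂ (x : ℝ) : ℝ :=
  ∫ t in (0 : ℝ)..x, (2 * arctan (exp t) - π / 2)

lemma circlePatternG₂_convex : ConvexOn ℝ Set.univ circlePatternG₂ := by
  have hc : Continuous (fun t : ℝ => 2 * arctan (exp t) - π / 2) := by
    exact (continuous_const.mul (Real.continuous_arctan.comp Real.continuous_exp)).sub continuous_const
  have hderiv : ∀ x : ℝ, HasDerivAt circlePatternG₂ (2 * arctan (exp x) - π / 2) x := fun x =>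
    (hc.integral_hasStrictDerivAt 0 x).hasDerivAt
  apply Monotone.convexOn_univ_of_deriv (fun x => (hderiv x).differentiableAt)
  have hd : deriv circlePatternG₂ = fun x => 2 * arctan (exp x) - π / 2 :=
    funext fun x => (hderiv x).deriv
  rw [hd]
  intro a b hab
  have : arctan (exp a) ≤ arctan (exp b) :=
    arctan_strictMono.monotone (exp_le_exp.mpr hab)
  linarith

lemma convexOn_finset_sum {ι E : Type*} [AddCommGroup E] [Module ℝ E]
    (t : Finset ι) (f : ι → E → ℝ) (h : ∀ i ∈ t, ConvexOn ℝ Set.univ (f i)) :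
    ConvexOn ℝ Set.univ (fun x => ∑ i ∈ t, f i x) := by
  classical
  induction t using Finset.induction_on with
  | empty => simpa using convexOn_const (0 : ℝ) convex_univ
  | @insert a s hnot ih =>
    simp only [Finset.sum_insert hnot]
    exact (h a (Finset.mem_insert_self a s)).add
      (ih fun i hi => h i (Finset.mem_insert_of_mem hi))

lemma edge_convex {V : Type*} (j k : V) :
    ConvexOn ℝ Set.univ (fun ρ : V → ℝ =>
      circlePatternG₂ (ρ j - ρ k) - (π / 2) * (ρ j + ρ k)) := by
  refine ⟨convex_univ, ?_⟩
  intro x _ y _ a b ha hb hab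
  simp only [Pi.add_apply, Pi.smul_apply, smul_eq_mul]
  have h := circlePatternG₂_convex.2 (Set.mem_univ (x j - x k)) (Set.mem_univ (y j - y k))
    ha hb hab
  simp only [smul_eq_mul] at h
  have harg : a * x j + b * y j - (a * x k + b * y k)
      = a * (x j - x k) + b * (y j - y k) := by ring
  rw [harg]
  nlinarith [h]

/-- The circle-pattern functional of Bobenko–Springborn is convex. -/
theorem circlePattern_functional_convex
    (V : Type*) [Fintype V] (E : Finset (V × V))
    (hE : ∀ e ∈ E, e.1 ≠ e.2) (hE' : ∀ e ∈ E, Prod.swap e ∉ E) (Φ : V → ℝ) :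
    ConvexOn ℝ Set.univ (fun ρ : V → ℝ =>
      ∑ e ∈ E, (circlePatternG₂ (ρ e.1 - ρ e.2) - (π / 2) * (ρ e.1 + ρ e.2)) +
        ∑ j : V, Φ j * ρ j) := by
  have h1 : ConvexOn ℝ Set.univ (fun ρ : V → ℝ =>
      ∑ e ∈ E, (circlePatternG₂ (ρ e.1 - ρ e.2) - (π / 2) * (ρ e.1 + ρ e.2))) :=
    convexOn_finset_sum E _ (fun e _ => edge_convex e.1 e.2)
  have h2 : ConvexOn ℝ Set.univ (fun ρ : V → ℝ => ∑ j : V, Φ j * ρ j) := by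
    refine ⟨convex_univ, ?_⟩
    intro x _ y _ a b _ _ _
    apply le_of_eq
    simp only [Pi.add_apply, Pi.smul_apply, smul_eq_mul, Finset.mul_sum,
      ← Finset.sum_add_distrib]
    exact Finset.sum_congr rfl fun i _ => by ring
  exact h1.add h2
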